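/- arXiv:2310.13930 — 2 statements merged into one kernel-verified Lean document; each statement's English description precedes it below -/
import Mathlib

section
/- Let L ≥ 1, m, D be natural numbers with 2^m dividing D. Then for every i ≤ m, T^i(L + D) = T^i(L) + 3^{α_i(L)} · (D / 2^i); in particular, T^i(L + D) ≡ T^i(L) (mod 2) for every i < m. -/
/-- The shortcut Collatz map: `T x = (3x+1)/2` if `x` is odd, `x/2` if `x` is even. -/
def T (x : ℕ) : ℕ := if Odd x then (3 * x + 1) / 2 else x / 2

/-- `alpha i L` is the number of indices `j < i` such that `T^[j] L` is odd. -/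
def alpha (i L : ℕ) : ℕ := ((Finset.range i).filter (fun j => Odd (T^[j] L))).card

lemma T_add_two_mul (x k : ℕ) : T (x + 2 * k) = T x + (if Odd x then 3 * k else k) := by
  have hpar : Odd (x + 2 * k) ↔ Odd x := by simp [Nat.odd_add]
  by_cases hx : Odd x
  · simp only [T, hpar, if_pos hx]
    rw [show 3 * (x + 2 * k) + 1 = 3 * x + 1 + 2 * (3 * k) by ring, Nat.add_mul_div_left _ _ two_pos]
  · simp only [T, hpar, if_neg hx]
    rw [Nat.add_mul_div_left _ _ two_pos]

lemma alpha_succ (i L : ℕ) :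
    alpha (i + 1) L = alpha i L + if Odd (T^[i] L) then 1 else 0 := by
  simp only [alpha, Finset.range_add_one, Finset.filter_insert]
  split
  · rw [Finset.card_insert_of_notMem (by simp)]
  · rfl

-- Before step `j < i` the shift is still even, so both orbits have the same parity and `T`
-- halves the shift, multiplying it by `3` as well when that parity is odd.
lemma iterate_T_add_two_pow_mul (i L k : ℕ) :
    T^[i] (L + 2 ^ i * k) = T^[i] L + 3 ^ alpha i L * k := by
  induction i generalizing k with
  | zero => simp [alpha]
  | succ i ih =>
    rw [Function.iterate_succ_apply', Function.iterate_succ_apply', pow_succ, mul_assoc, ih,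
      mul_left_comm, T_add_two_mul, alpha_succ]
    split <;> ring

theorem stmt2_general (L m D : ℕ) (hD : 2 ^ m ∣ D) :
    (∀ i ≤ m, T^[i] (L + D) = T^[i] L + 3 ^ (alpha i L) * (D / 2 ^ i)) ∧
    (∀ i < m, T^[i] (L + D) % 2 = T^[i] L % 2) := by
  constructor
  · intro i hi
    obtain ⟨c, rfl⟩ := (pow_dvd_pow 2 hi).trans hD
    rw [Nat.mul_div_cancel_left _ (by positivity), iterate_T_add_two_pow_mul]
  · intro i hi
    obtain ⟨c, rfl⟩ := (pow_dvd_pow 2 hi).trans hD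
    rw [pow_succ, mul_assoc, iterate_T_add_two_pow_mul, mul_left_comm, Nat.add_mul_mod_self_left]

theorem stmt2 (L m D : ℕ) (hL : 1 ≤ L) (hD : 2 ^ m ∣ D) :
    (∀ i ≤ m, T^[i] (L + D) = T^[i] L + 3 ^ (alpha i L) * (D / 2 ^ i)) ∧
    (∀ i < m, T^[i] (L + D) % 2 = T^[i] L % 2) :=
  stmt2_general L m D hD
end

section
/- Let u ≥ 2 be a natural number, let β = ⌊(u·log₂3 − 1)/(log₂3 − 1)⌋ and α = β − u. Then 3^{α} < 2^{β−1} < (3/2)·3^{α}; that is, 1 < 2^{β−1}/3^{α} < 3/2. -/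
/-! Put `L = log₂ 3` and `x = (u L - 1) / (L - 1)`. The two floor inequalities `β ≤ x < β + 1`
rearrange to `α L ≤ β - 1` and `β < (α + 1) L`, which after exponentiating base `2` are
`3 ^ α ≤ 2 ^ (β - 1)` and `2 ^ β < 3 ^ (α + 1)`. The first is strict because a power of `3` is odd
while `2 ^ (β - 1)` is even, since `β ≥ u + 1 ≥ 3`. -/

open Real

lemma one_lt_logb_two_three : 1 < logb 2 3 := by
  simpa using logb_lt_logb one_lt_two two_pos (by norm_num : (2 : ℝ) < 3)

lemma logb_two_three_lt_two : logb 2 3 < 2 := by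
  rw [logb_lt_iff_lt_rpow one_lt_two (by norm_num)]
  norm_num

lemma three_pow_le_two_pow_iff (m n : ℕ) :
    (3 : ℝ) ^ m ≤ 2 ^ n ↔ m * logb 2 3 ≤ n := by
  rw [← logb_le_logb one_lt_two (by positivity) (by positivity), logb_pow, logb_pow,
    logb_self_eq_one one_lt_two, mul_one]

lemma two_pow_lt_three_pow_iff (m n : ℕ) :
    (2 : ℝ) ^ n < 3 ^ m ↔ (n : ℝ) < m * logb 2 3 := by
  simpa only [not_le] using (three_pow_le_two_pow_iff m n).not

lemma three_pow_ne_two_pow (m : ℕ) {n : ℕ} (hn : n ≠ 0) : 3 ^ m ≠ 2 ^ n := by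
  intro h
  have hodd : Odd (3 ^ m) := Odd.pow (by decide)
  rw [h] at hodd
  exact Nat.not_even_iff_odd.mpr hodd (Nat.even_pow.mpr ⟨even_two, hn⟩)

section FloorBounds

variable {L : ℝ} {u β : ℕ}

lemma add_one_le_of_eq_nat_floor (hL : 1 < L) (hu : L ≤ u)
    (hβ : β = ⌊(u * L - 1) / (L - 1)⌋₊) : u + 1 ≤ β := by
  rw [hβ]
  apply Nat.le_floor
  rw [le_div_iff₀ (sub_pos.mpr hL)]
  push_cast
  linarith

lemma sub_mul_le_of_eq_nat_floor (hL : 1 < L) (hu : L ≤ u)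
    (hβ : β = ⌊(u * L - 1) / (L - 1)⌋₊) : ((β : ℝ) - u) * L ≤ β - 1 := by
  have hx : 0 ≤ (u * L - 1) / (L - 1) := div_nonneg (by nlinarith) (by linarith)
  have h := (le_div_iff₀ (sub_pos.mpr hL)).mp (hβ ▸ Nat.floor_le hx)
  linarith

lemma lt_sub_add_one_mul_of_eq_nat_floor (hL : 1 < L)
    (hβ : β = ⌊(u * L - 1) / (L - 1)⌋₊) : (β : ℝ) < (β - u + 1) * L := by
  have h := (div_lt_iff₀ (sub_pos.mpr hL)).mp (hβ ▸ Nat.lt_floor_add_one ((u * L - 1) / (L - 1)))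
  linarith

end FloorBounds

theorem stmt6 (u : ℕ) (hu : 2 ≤ u) :
    ∀ β α : ℕ,
      β = ⌊((u : ℝ) * Real.logb 2 3 - 1) / (Real.logb 2 3 - 1)⌋₊ →
      α = β - u →
      (3 : ℝ) ^ α < 2 ^ (β - 1) ∧ (2 : ℝ) ^ (β - 1) < (3 / 2) * 3 ^ α := by
  intro β α hβ hα
  have hL := one_lt_logb_two_three
  have hLu : logb 2 3 ≤ u := by
    linarith [logb_two_three_lt_two, (Nat.ofNat_le_cast.mpr hu : (2 : ℝ) ≤ u)]
  have hβu := add_one_le_of_eq_nat_floor hL hLu hβ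
  have hα' : (α : ℝ) = β - u := by rw [hα, Nat.cast_sub (by omega)]
  have hβ' : ((β - 1 : ℕ) : ℝ) = β - 1 := by rw [Nat.cast_sub (by omega), Nat.cast_one]
  constructor
  · refine lt_of_le_of_ne ?_ ?_
    · rw [three_pow_le_two_pow_iff, hα', hβ']
      exact sub_mul_le_of_eq_nat_floor hL hLu hβ
    · exact_mod_cast three_pow_ne_two_pow α (by omega : β - 1 ≠ 0)
  · have h : (2 : ℝ) ^ β < 3 ^ (α + 1) := by
      rw [two_pow_lt_three_pow_iff, Nat.cast_succ, hα']
      exact lt_sub_add_one_mul_of_eq_nat_floor hL hβ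
    obtain ⟨k, rfl⟩ : ∃ k, β = k + 1 := ⟨β - 1, by omega⟩
    rw [pow_succ, pow_succ] at h
    rw [Nat.add_sub_cancel]
    linarith
end
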